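/- arXiv:1611.01824 — 3 statements merged into one kernel-verified Lean document; each statement's English description precedes it below -/
import Mathlib

section
/- Let G be a finite undirected graph on N vertices with M edges that is a tree (connected and acyclic), with an arbitrary orientation, edges numbered k = 1,…,M with endpoints ℓ_k (head) and m_k (tail), and oriented incidence matrix D ∈ ℝ^{N×M}. Let p₁,…,p_N ∈ ℝ³ be vectors such that p_{ℓ_k} ≠ p_{m_k} for every edge k. Define the block matrix F_p ∈ ℝ^{M×3M} whose k-th row has the row vector 2·(p_{ℓ_k} − p_{m_k})ᵀ in its k-th 3-column block and zeros elsewhere; define F̄_p = diag(F_p, I_{3M}) ∈ ℝ^{4M×6M} and D̄ = diag(D ⊗ I₃, D ⊗ I₃) ∈ ℝ^{6N×6M}, where ⊗ denotes the Kronecker product. Then the matrix P = F̄_p · D̄ᵀ · D̄ · F̄_pᵀ ∈ ℝ^{4M×4M} is positive definite. -/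
/-!
Write `P = Bᵀ B` with `B = D̄ F̄ₚᵀ = diag((D ⊗ I₃) Fₚᵀ, D ⊗ I₃)`; then `P` is positive definite as
soon as `B` is injective. `Fₚᵀ` is injective because the `k`-th block row of `Fₚ` is the nonzero
vector `2 (p_{ℓ_k} - p_{m_k})ᵀ`, and `D ⊗ I₃` is injective because `D` is: on a connected graph
the kernel of `Dᵀ` consists of the constant vectors, so `rank D = N - 1`, which is `M` for a tree.
-/

open Matrix
open Kronecker

namespace Matrix

variable {l m n o R : Type*}

theorem kronecker_one_mulVec_apply [Semiring R] [Fintype m] [Fintype n] [DecidableEq n]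
    (A : Matrix l m R) (y : m × n → R) (i : l) (c : n) :
    (A ⊗ₖ (1 : Matrix n n R) *ᵥ y) (i, c) = (A *ᵥ fun k => y (k, c)) i := by
  simp [mulVec, dotProduct, Fintype.sum_prod_type, kroneckerMap_apply, one_apply]

theorem mulVec_injective_kronecker_one [Semiring R] [Fintype m] [Fintype n] [DecidableEq n]
    {A : Matrix l m R} (hA : Function.Injective A.mulVec) :
    Function.Injective (A ⊗ₖ (1 : Matrix n n R)).mulVec := by
  intro x y hxy
  funext ⟨k, c⟩
  have hc : (A *ᵥ fun k => x (k, c)) = A *ᵥ fun k => y (k, c) := funext fun i => by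
    rw [← kronecker_one_mulVec_apply, ← kronecker_one_mulVec_apply, hxy]
  exact congrFun (hA hc) k

theorem mulVec_injective_fromBlocks_zero [Semiring R] [Fintype m] [Fintype o]
    {A : Matrix l m R} {D : Matrix n o R} (hA : Function.Injective A.mulVec)
    (hD : Function.Injective D.mulVec) :
    Function.Injective (fromBlocks A 0 0 D).mulVec := by
  intro x y hxy
  simp only [fromBlocks_mulVec, zero_mulVec, add_zero, zero_add, Sum.elim_eq_iff] at hxy
  rw [← Sum.elim_comp_inl_inr x, ← Sum.elim_comp_inl_inr y, hA hxy.1, hD hxy.2]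

theorem mulVec_injective_transpose_of_eq_ite [Field R] [Fintype m] [DecidableEq m]
    {F : Matrix m (m × n) R} {w : m → n → R}
    (hF : ∀ k j c, F k (j, c) = if j = k then w k c else 0) (hw : ∀ k, w k ≠ 0) :
    Function.Injective Fᵀ.mulVec := by
  have hFt : ∀ x j c, (Fᵀ *ᵥ x) (j, c) = w j c * x j := fun x j c => by
    simp [mulVec, dotProduct, hF, ite_mul]
  intro x y hxy
  funext j
  obtain ⟨c, hc⟩ := Function.ne_iff.mp (hw j)
  have h := congrFun hxy (j, c)
  rw [hFt, hFt] at h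
  exact mul_left_cancel₀ hc h

end Matrix

section OrientedIncidence

variable {V ι : Type*} (R : Type*) [DecidableEq V]

def orientedIncMatrix [Ring R] (head tail : ι → V) : Matrix V ι R :=
  of fun i k => if i = head k then 1 else if i = tail k then -1 else 0

variable {R} {head tail : ι → V}

theorem transpose_orientedIncMatrix_mulVec_apply [Ring R] [Fintype V]
    (hne : ∀ k, head k ≠ tail k) (v : V → R) (k : ι) :
    ((orientedIncMatrix R head tail)ᵀ *ᵥ v) k = v (head k) - v (tail k) := by
  simp only [mulVec, dotProduct, transpose_apply, orientedIncMatrix, of_apply, ite_mul,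
    one_mul, neg_one_mul, zero_mul]
  simp [Finset.sum_ite, Finset.filter_eq', Finset.filter_ne',
    Ne.symm (hne k), sub_eq_add_neg]

variable {G : SimpleGraph V}

theorem eq_of_transpose_orientedIncMatrix_mulVec_eq_zero [Ring R] [Fintype V]
    (hG : G.Connected) (hne : ∀ k, head k ≠ tail k)
    (hsurj : ∀ e ∈ G.edgeSet, ∃ k, s(head k, tail k) = e) {v : V → R}
    (hv : (orientedIncMatrix R head tail)ᵀ *ᵥ v = 0) (i j : V) : v i = v j := by
  have hadj : ∀ ⦃a b : V⦄, G.Adj a b → v a = v b := by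
    intro a b hab
    obtain ⟨k, hk⟩ := hsurj s(a, b) hab
    have hk' : v (head k) = v (tail k) := by
      rw [← sub_eq_zero, ← transpose_orientedIncMatrix_mulVec_apply hne, hv, Pi.zero_apply]
    rcases Sym2.eq_iff.mp hk with ⟨rfl, rfl⟩ | ⟨rfl, rfl⟩
    exacts [hk', hk'.symm]
  obtain ⟨w⟩ := hG.preconnected i j
  induction w with
  | nil => rfl
  | cons h _ ih => exact (hadj h).trans ih

theorem ker_transpose_orientedIncMatrix [Field R] [Fintype V]
    (hG : G.Connected) (hne : ∀ k, head k ≠ tail k)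
    (hsurj : ∀ e ∈ G.edgeSet, ∃ k, s(head k, tail k) = e) :
    LinearMap.ker (orientedIncMatrix R head tail)ᵀ.mulVecLin = Submodule.span R {1} := by
  obtain ⟨i₀⟩ := hG.nonempty
  apply le_antisymm
  · intro v hv
    rw [Submodule.mem_span_singleton]
    refine ⟨v i₀, funext fun j => ?_⟩
    simpa using eq_of_transpose_orientedIncMatrix_mulVec_eq_zero hG hne hsurj hv i₀ j
  · rw [Submodule.span_le, Set.singleton_subset_iff, SetLike.mem_coe, LinearMap.mem_ker,
      mulVecLin_apply]
    funext k
    simp [transpose_orientedIncMatrix_mulVec_apply hne]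

theorem rank_orientedIncMatrix_of_isTree [Field R] [Fintype V] [Fintype ι]
    (hG : G.IsTree) (hadj : ∀ k, G.Adj (head k) (tail k))
    (hinj : Function.Injective fun k => s(head k, tail k))
    (hsurj : ∀ e ∈ G.edgeSet, ∃ k, s(head k, tail k) = e) :
    (orientedIncMatrix R head tail).rank = Fintype.card ι := by
  have : Nonempty V := hG.connected.nonempty
  have hcard : Fintype.card ι + 1 = Fintype.card V := by
    have hbij : Function.Bijective fun k => (⟨s(head k, tail k), hadj k⟩ : G.edgeSet) :=
      ⟨fun a b hab => hinj (congrArg Subtype.val hab), fun ⟨e, he⟩ =>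
        (hsurj e he).imp fun _ hk => Subtype.ext hk⟩
    rw [← Nat.card_eq_fintype_card, ← Nat.card_eq_fintype_card, Nat.card_eq_of_bijective _ hbij]
    exact (SimpleGraph.isTree_iff_connected_and_card.mp hG).2
  have h := LinearMap.finrank_range_add_finrank_ker (orientedIncMatrix R head tail)ᵀ.mulVecLin
  rw [ker_transpose_orientedIncMatrix hG.connected (fun k => (hadj k).ne) hsurj,
    finrank_span_singleton one_ne_zero, Module.finrank_fintype_fun_eq_card,
    ← rank, rank_transpose] at h
  omega

theorem mulVec_orientedIncMatrix_injective [Field R] [Fintype V] [Fintype ι]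
    (hG : G.IsTree) (hadj : ∀ k, G.Adj (head k) (tail k))
    (hinj : Function.Injective fun k => s(head k, tail k))
    (hsurj : ∀ e ∈ G.edgeSet, ∃ k, s(head k, tail k) = e) :
    Function.Injective (orientedIncMatrix R head tail).mulVec := by
  have h := LinearMap.finrank_range_add_finrank_ker (orientedIncMatrix R head tail).mulVecLin
  rw [← rank, rank_orientedIncMatrix_of_isTree hG hadj hinj hsurj,
    Module.finrank_fintype_fun_eq_card, add_eq_left, Submodule.finrank_eq_zero] at h
  rw [← coe_mulVecLin, ← LinearMap.ker_eq_bot]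
  exact h

end OrientedIncidence

/-- For a tree `G` with oriented incidence matrix `D`, and points
`p i ∈ ℝ³` with `p (head k) ≠ p (tail k)` for every edge `k`, the matrix
`P = F̄ₚ D̄ᵀ D̄ F̄ₚᵀ` is positive definite, where `Fₚ` is the block matrix whose `k`-th
row carries `2 (p (head k) - p (tail k))ᵀ` in its `k`-th 3-column block,
`F̄ₚ = diag(Fₚ, I₃ₘ)` and `D̄ = diag(D ⊗ I₃, D ⊗ I₃)`. -/
theorem stmt_1 {N M : ℕ} (G : SimpleGraph (Fin N)) (hG : G.IsTree)
    (head tail : Fin M → Fin N)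
    (hadj : ∀ k, G.Adj (head k) (tail k))
    (hinj : Function.Injective (fun k : Fin M => s(head k, tail k)))
    (hsurj : ∀ e ∈ G.edgeSet, ∃ k : Fin M, s(head k, tail k) = e)
    (D : Matrix (Fin N) (Fin M) ℝ)
    (hD : ∀ i k, D i k =
      if i = head k then 1 else if i = tail k then -1 else 0)
    (p : Fin N → Fin 3 → ℝ)
    (hp : ∀ k, p (head k) ≠ p (tail k))
    (Fp : Matrix (Fin M) (Fin M × Fin 3) ℝ)
    (hFp : ∀ k j c, Fp k (j, c) =
      if j = k then 2 * (p (head k) c - p (tail k) c) else 0)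
    (Fbar : Matrix (Fin M ⊕ (Fin M × Fin 3)) ((Fin M × Fin 3) ⊕ (Fin M × Fin 3)) ℝ)
    (hFbar : Fbar = Matrix.fromBlocks Fp 0 0 (1 : Matrix (Fin M × Fin 3) (Fin M × Fin 3) ℝ))
    (Dbar : Matrix ((Fin N × Fin 3) ⊕ (Fin N × Fin 3)) ((Fin M × Fin 3) ⊕ (Fin M × Fin 3)) ℝ)
    (hDbar : Dbar = Matrix.fromBlocks
      (D ⊗ₖ (1 : Matrix (Fin 3) (Fin 3) ℝ)) 0 0
      (D ⊗ₖ (1 : Matrix (Fin 3) (Fin 3) ℝ))) :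
    (Fbar * Dbar.transpose * Dbar * Fbar.transpose).PosDef := by
  have hD' : D = orientedIncMatrix ℝ head tail := ext fun i k => by simp [hD, orientedIncMatrix]
  have hK : Function.Injective (D ⊗ₖ (1 : Matrix (Fin 3) (Fin 3) ℝ)).mulVec :=
    mulVec_injective_kronecker_one (hD' ▸ mulVec_orientedIncMatrix_injective hG hadj hinj hsurj)
  have hF : Function.Injective Fpᵀ.mulVec := by
    refine mulVec_injective_transpose_of_eq_ite hFp fun k h => hp k (funext fun c => ?_)
    simpa [sub_eq_zero] using congrFun h c
  have hB : Function.Injective (Dbar * Fbarᵀ).mulVec := by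
    rw [hDbar, hFbar, fromBlocks_transpose, fromBlocks_multiply]
    simp only [transpose_zero, transpose_one, Matrix.mul_zero, Matrix.zero_mul, Matrix.mul_one,
      add_zero, zero_add]
    refine mulVec_injective_fromBlocks_zero ?_ hK
    intro x y hxy
    simp only [← mulVec_mulVec] at hxy
    exact hF (hK hxy)
  have hP := PosDef.conjTranspose_mul_self _ hB
  rwa [conjTranspose_eq_transpose_of_trivial, transpose_mul, transpose_transpose,
    ← Matrix.mul_assoc] at hP
end

section
/- Let a, b > 0 and define f : (−a, b) → ℝ by f(ξ) = ln((1 + ξ/a) / (1 − ξ/b)). Then for every ε̄ ≥ 0 and every ξ ∈ (−a, b) with |f(ξ)| ≤ ε̄, it holds that −a < a·b·(e^{−ε̄} − 1)/(b + a·e^{−ε̄}) ≤ ξ ≤ a·b·(e^{ε̄} − 1)/(b + a·e^{ε̄}) < b; that is, ξ remains in a compact subinterval of (−a, b) determined only by ε̄, a, b. -/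
open Real Set

/-! Writing `r ξ = (1 + ξ/a)/(1 - ξ/b) = b(a + ξ)/(a(b - ξ))`, the map `r` is an increasing bijection
from `(-a, b)` onto `(0, ∞)` whose inverse is `t ↦ ab(t - 1)/(b + at)`. The bound `|log (r ξ)| ≤ ε̄`
says `e^{-ε̄} ≤ r ξ ≤ e^{ε̄}`, and applying the inverse gives the two bounds on `ξ`, which lie strictly
inside `(-a, b)` because the inverse maps `(0, ∞)` into it. -/

section ErrorRatio

variable {a b ξ t : ℝ}

lemma one_add_div_div_one_sub_div (ha : a ≠ 0) (hb : b ≠ 0) (hξ : ξ ≠ b) :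
    (1 + ξ / a) / (1 - ξ / b) = b * (a + ξ) / (a * (b - ξ)) := by
  have : b - ξ ≠ 0 := sub_ne_zero.2 hξ.symm
  field_simp

lemma neg_lt_mul_sub_one_div (ha : 0 < a) (hb : 0 < b) (ht : 0 < t) :
    -a < a * b * (t - 1) / (b + a * t) := by
  rw [lt_div_iff₀ (by positivity)]
  nlinarith [mul_pos (mul_pos ha ha) ht]

lemma mul_sub_one_div_lt (ha : 0 < a) (hb : 0 < b) (ht : 0 < t) :
    a * b * (t - 1) / (b + a * t) < b := by
  rw [div_lt_iff₀ (by positivity)]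
  nlinarith [mul_pos hb hb]

lemma one_add_div_div_one_sub_div_le_iff (ha : 0 < a) (hb : 0 < b) (hξ : ξ ∈ Ioo (-a) b)
    (ht : 0 < t) :
    (1 + ξ / a) / (1 - ξ / b) ≤ t ↔ ξ ≤ a * b * (t - 1) / (b + a * t) := by
  have hden : 0 < a * (b - ξ) := mul_pos ha (sub_pos.2 hξ.2)
  rw [one_add_div_div_one_sub_div ha.ne' hb.ne' hξ.2.ne, div_le_iff₀ hden,
    le_div_iff₀ (by positivity)]
  constructor <;> intro h <;> linarith

lemma le_one_add_div_div_one_sub_div_iff (ha : 0 < a) (hb : 0 < b) (hξ : ξ ∈ Ioo (-a) b)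
    (ht : 0 < t) :
    t ≤ (1 + ξ / a) / (1 - ξ / b) ↔ a * b * (t - 1) / (b + a * t) ≤ ξ := by
  have hden : 0 < a * (b - ξ) := mul_pos ha (sub_pos.2 hξ.2)
  rw [one_add_div_div_one_sub_div ha.ne' hb.ne' hξ.2.ne, le_div_iff₀ hden,
    div_le_iff₀ (by positivity)]
  constructor <;> intro h <;> linarith

lemma one_add_div_div_one_sub_div_pos (ha : 0 < a) (hb : 0 < b) (hξ : ξ ∈ Ioo (-a) b) :
    0 < (1 + ξ / a) / (1 - ξ / b) := by
  rw [one_add_div_div_one_sub_div ha.ne' hb.ne' hξ.2.ne]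
  exact div_pos (mul_pos hb (by linarith [hξ.1])) (mul_pos ha (sub_pos.2 hξ.2))

end ErrorRatio

/-- For `a, b > 0` and `f ξ = ln((1 + ξ/a)/(1 − ξ/b))`: whenever
`ε̄ ≥ 0`, any `ξ ∈ (−a, b)` with `|f ξ| ≤ ε̄` satisfies
`−a < ab(e^{−ε̄} − 1)/(b + a e^{−ε̄}) ≤ ξ ≤ ab(e^{ε̄} − 1)/(b + a e^{ε̄}) < b`. -/
theorem stmt_6 (a b : ℝ) (ha : 0 < a) (hb : 0 < b)
    (f : ℝ → ℝ) (hf : ∀ ξ, f ξ = Real.log ((1 + ξ / a) / (1 - ξ / b))) :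
    ∀ εbar : ℝ, 0 ≤ εbar → ∀ ξ ∈ Ioo (-a) b, |f ξ| ≤ εbar →
      -a < a * b * (Real.exp (-εbar) - 1) / (b + a * Real.exp (-εbar)) ∧
      a * b * (Real.exp (-εbar) - 1) / (b + a * Real.exp (-εbar)) ≤ ξ ∧
      ξ ≤ a * b * (Real.exp εbar - 1) / (b + a * Real.exp εbar) ∧
      a * b * (Real.exp εbar - 1) / (b + a * Real.exp εbar) < b := by
  intro ε _ ξ hξ hfξ
  have hr := one_add_div_div_one_sub_div_pos ha hb hξ
  rw [hf, abs_le] at hfξ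
  have hlower : exp (-ε) ≤ (1 + ξ / a) / (1 - ξ / b) := (le_log_iff_exp_le hr).1 hfξ.1
  have hupper : (1 + ξ / a) / (1 - ξ / b) ≤ exp ε := (log_le_iff_le_exp hr).1 hfξ.2
  exact ⟨neg_lt_mul_sub_one_div ha hb (exp_pos _),
    (le_one_add_div_div_one_sub_div_iff ha hb hξ (exp_pos _)).1 hlower,
    (one_add_div_div_one_sub_div_le_iff ha hb hξ (exp_pos _)).1 hupper,
    mul_sub_one_div_lt ha hb (exp_pos _)⟩
end

section
/- Let T ∈ (0, ∞], let c ≥ 0, and let ε : [0, T) → ℝⁿ be a differentiable curve such that for every t ∈ [0, T), if ‖ε(t)‖ > c then the derivative at t of the function s ↦ (1/2)·‖ε(s)‖² is strictly negative. Then ‖ε(t)‖ ≤ max{‖ε(0)‖, c} for all t ∈ [0, T). -/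
/-!
Let `V = ½‖ε‖²` and `M = max (V 0) (½ c²)`. If `V t > M`, take the last time `t₀ ≤ t`
with `V t₀ ≤ M`. On `(t₀, t]` we have `V > ½ c²`, i.e. `‖ε‖ > c`, so `V` is strictly
decreasing on `[t₀, t]` and `V t < V t₀ ≤ M`, a contradiction.
-/

open Set

theorem le_max_of_deriv_neg_of_lt {f : ℝ → ℝ} {a b K : ℝ} (hf : ContinuousOn f (Icc a b))
    (hf' : ∀ x ∈ Ioo a b, K < f x → deriv f x < 0) :
    ∀ x ∈ Icc a b, f x ≤ max (f a) K := by
  intro x ⟨hax, hxb⟩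
  by_contra! hx
  set M := max (f a) K
  set A := Icc a x ∩ f ⁻¹' Iic M
  have hA_closed : IsClosed A :=
    (hf.mono (Icc_subset_Icc_right hxb)).preimage_isClosed_of_isClosed
      isClosed_Icc isClosed_Iic
  have haA : a ∈ A := ⟨left_mem_Icc.2 hax, le_max_left (f a) K⟩
  have hA_bdd : BddAbove A := bddAbove_Icc.mono inter_subset_left
  obtain ⟨⟨hat₀, ht₀x⟩, ht₀M⟩ : sSup A ∈ A :=
    hA_closed.csSup_mem ⟨a, haA⟩ hA_bdd
  set t₀ := sSup A
  have hM_lt : ∀ s ∈ Ioc t₀ x, M < f s := fun s ⟨ht₀s, hsx⟩ => by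
    by_contra! hs
    exact (le_csSup hA_bdd ⟨⟨hat₀.trans ht₀s.le, hsx⟩, hs⟩).not_gt ht₀s
  have ht₀x' : t₀ < x := ht₀x.lt_of_ne fun h => (h ▸ ht₀M).not_gt hx
  have hanti : StrictAntiOn f (Icc t₀ x) := by
    refine strictAntiOn_of_deriv_neg (convex_Icc _ _)
      (hf.mono (Icc_subset_Icc hat₀ hxb)) fun s hs => ?_
    rw [interior_Icc] at hs
    exact hf' s ⟨hat₀.trans_lt hs.1, hs.2.trans_le hxb⟩
      ((le_max_right _ _).trans_lt (hM_lt s (Ioo_subset_Ioc_self hs)))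
  have hfx_lt : f x < f t₀ :=
    hanti (left_mem_Icc.2 ht₀x'.le) (right_mem_Icc.2 ht₀x'.le) ht₀x'
  exact (hfx_lt.trans_le ht₀M).not_gt hx

theorem stmt_9_general {n : ℕ} (T : EReal) (c : ℝ) (hc : 0 ≤ c)
    (ε : ℝ → EuclideanSpace ℝ (Fin n))
    (S : Set ℝ) (hS : S = {t : ℝ | 0 ≤ t ∧ (t : EReal) < T})
    (hdiff : DifferentiableOn ℝ ε S)
    (hdec : ∀ t ∈ S, ‖ε t‖ > c →
      derivWithin (fun s => (1 / 2 : ℝ) * ‖ε s‖ ^ 2) S t < 0) :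
    ∀ t ∈ S, ‖ε t‖ ≤ max ‖ε 0‖ c := by
  intro t ht
  have hIcc : Icc 0 t ⊆ S := fun s ⟨hs0, hst⟩ => by
    rw [hS] at ht ⊢
    exact ⟨hs0, (EReal.coe_le_coe_iff.2 hst).trans_lt ht.2⟩
  have hV : ContinuousOn (fun s => (1 / 2 : ℝ) * ‖ε s‖ ^ 2) (Icc 0 t) :=
    (continuousOn_const.mul (hdiff.continuousOn.norm.pow 2)).mono hIcc
  have hV_deriv : ∀ x ∈ Ioo 0 t, (1 / 2 : ℝ) * c ^ 2 < (1 / 2) * ‖ε x‖ ^ 2 →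
      deriv (fun s => (1 / 2 : ℝ) * ‖ε s‖ ^ 2) x < 0 := fun x hx hcx => by
    have hS_nhds : S ∈ nhds x := Filter.mem_of_superset (isOpen_Ioo.mem_nhds hx)
      (Ioo_subset_Icc_self.trans hIcc)
    rw [← derivWithin_of_mem_nhds hS_nhds]
    exact hdec x (hIcc (Ioo_subset_Icc_self hx)) (by nlinarith [norm_nonneg (ε x)])
  have hsq_le {r : ℝ} (hr : 0 ≤ r) (h : (1 / 2 : ℝ) * ‖ε t‖ ^ 2 ≤ (1 / 2) * r ^ 2) :
      ‖ε t‖ ≤ r :=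
    (pow_le_pow_iff_left₀ (norm_nonneg _) hr two_ne_zero).1 (by linarith)
  have hVt := le_max_of_deriv_neg_of_lt hV hV_deriv t (right_mem_Icc.2 (hS ▸ ht).1)
  rcases le_max_iff.1 hVt with h | h
  · exact le_max_of_le_left (hsq_le (norm_nonneg _) h)
  · exact le_max_of_le_right (hsq_le hc h)

/-- Let `T ∈ (0, ∞]`, `c ≥ 0`, and let `ε : [0, T) → ℝⁿ` be a
differentiable curve such that whenever `‖ε t‖ > c`, the derivative of the Lyapunov
function `V s = (1/2)‖ε s‖²` at `t` (within `[0, T)`) is strictly negative.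
Then `‖ε t‖ ≤ max ‖ε 0‖ c` on `[0, T)`. -/
theorem stmt_9 {n : ℕ} (T : EReal) (hT : 0 < T) (c : ℝ) (hc : 0 ≤ c)
    (ε : ℝ → EuclideanSpace ℝ (Fin n))
    (S : Set ℝ) (hS : S = {t : ℝ | 0 ≤ t ∧ (t : EReal) < T})
    (hdiff : DifferentiableOn ℝ ε S)
    (hdec : ∀ t ∈ S, ‖ε t‖ > c →
      derivWithin (fun s => (1 / 2 : ℝ) * ‖ε s‖ ^ 2) S t < 0) :
    ∀ t ∈ S, ‖ε t‖ ≤ max ‖ε 0‖ c :=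
  stmt_9_general T c hc ε S hS hdiff hdec
end
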